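/- arXiv:1309.4015 — 3 statements merged into one kernel-verified Lean document; each statement's English description precedes it below -/
import Mathlib

section
/- On S³ ⊂ ℝ⁴, the angle function f = g(X,Z) = -y₁² - x₁² + y₂² + x₂² between the Reeb fields Z = y₁∂x₁ - x₁∂y₁ + y₂∂x₂ - x₂∂y₂ and X = -y₁∂x₁ + x₁∂y₁ + y₂∂x₂ - x₂∂y₂ satisfies ‖∇f‖² = 4(1 - f²), where ∇f is the gradient on the round sphere; in particular f is transnormal. -/
open scoped RealInnerProductSpace

noncomputable section

abbrev E4 := EuclideanSpace ℝ (Fin 4)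

/-- The angle function `f = g(X,Z) = -x₁² - y₁² + x₂² + y₂²` of the two Reeb
fields `Z = y₁∂x₁ - x₁∂y₁ + y₂∂x₂ - x₂∂y₂` and `X = -y₁∂x₁ + x₁∂y₁ + y₂∂x₂ - x₂∂y₂`
on `S³`, with coordinates `(x₁, y₁, x₂, y₂) = (p 0, p 1, p 2, p 3)`. -/
def angleF : E4 → ℝ := fun p => -(p 0) ^ 2 - (p 1) ^ 2 + (p 2) ^ 2 + (p 3) ^ 2

/-- The Riemannian gradient of (the restriction of) `f` on the unit sphere:
the ambient gradient projected onto the tangent space of the sphere. -/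
def sphereGrad (f : E4 → ℝ) (p : E4) : E4 :=
  gradient f p - ⟪gradient f p, p⟫ • p

/-! The angle function is the quadratic form `f p = ⟪R p, p⟫` of the reflection
`R = diag(-1, -1, 1, 1)`, so its ambient gradient is `2 R p` and its spherical gradient is
`2 (R p - f p • p)`. As a self-adjoint involution `R` is an isometry, hence on the unit sphere
`‖∇f‖² = 4 (‖R p‖² - f²) = 4 (1 - f²)`. -/

section

variable {E : Type*} [NormedAddCommGroup E] [InnerProductSpace ℝ E]

theorem norm_sub_inner_smul_sq_of_norm_eq_one (v : E) {p : E} (hp : ‖p‖ = 1) :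
    ‖v - ⟪v, p⟫ • p‖ ^ 2 = ‖v‖ ^ 2 - ⟪v, p⟫ ^ 2 := by
  rw [norm_sub_sq_real, inner_smul_right, norm_smul, hp, mul_one, Real.norm_eq_abs, sq_abs]
  ring

theorem LinearMap.IsSymmetric.norm_apply_of_involutive {T : E →ₗ[ℝ] E} (hT : T.IsSymmetric)
    (hTT : ∀ x, T (T x) = x) (x : E) : ‖T x‖ = ‖x‖ := by
  rw [← sq_eq_sq₀ (norm_nonneg _) (norm_nonneg _), ← real_inner_self_eq_norm_sq,
    ← real_inner_self_eq_norm_sq, hT, hTT]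

variable [CompleteSpace E] {T : E →L[ℝ] E}

theorem hasGradientAt_inner_apply_self (hT : (T : E →ₗ[ℝ] E).IsSymmetric) (x : E) :
    HasGradientAt (fun y => ⟪T y, y⟫) ((2 : ℝ) • T x) x := by
  rw [hasGradientAt_iff_hasFDerivAt]
  refine (T.hasFDerivAt.inner ℝ (hasFDerivAt_id x)).congr_fderiv ?_
  ext v
  simp only [ContinuousLinearMap.comp_apply, ContinuousLinearMap.prod_apply, fderivInnerCLM_apply,
    InnerProductSpace.toDual_apply_apply, real_inner_smul_left, id, ContinuousLinearMap.coe_id']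
  rw [hT.apply_clm v, real_inner_comm (T x) v]
  ring

theorem norm_sq_tangential_gradient_inner_apply_self (hT : (T : E →ₗ[ℝ] E).IsSymmetric)
    (hTT : ∀ x, T (T x) = x) {p : E} (hp : ‖p‖ = 1) :
    ‖gradient (fun y => ⟪T y, y⟫) p - ⟪gradient (fun y => ⟪T y, y⟫) p, p⟫ • p‖ ^ 2 =
      4 * (1 - ⟪T p, p⟫ ^ 2) := by
  have hTp : ‖T p‖ = 1 := (hT.norm_apply_of_involutive hTT p).trans hp
  rw [(hasGradientAt_inner_apply_self hT p).gradient, norm_sub_inner_smul_sq_of_norm_eq_one _ hp,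
    norm_smul, real_inner_smul_left, hTp]
  norm_num
  ring

end

def angleReflection : E4 →L[ℝ] E4 :=
  Matrix.toEuclideanCLM (𝕜 := ℝ) (Matrix.diagonal ![-1, -1, 1, 1])

theorem angleReflection_isSymmetric : (angleReflection : E4 →ₗ[ℝ] E4).IsSymmetric :=
  Matrix.isSymmetric_toEuclideanLin_iff.mpr (Matrix.isHermitian_diagonal _)

theorem angleReflection_angleReflection (x : E4) : angleReflection (angleReflection x) = x := by
  ext i
  fin_cases i <;> simp [angleReflection, Matrix.mulVec_diagonal]

theorem angleF_eq_inner_angleReflection (p : E4) : angleF p = ⟪angleReflection p, p⟫ := by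
  rw [real_inner_comm, angleReflection, Matrix.inner_toEuclideanCLM]
  simp [angleF, Matrix.mulVec_diagonal, dotProduct, Fin.sum_univ_four]
  ring

/-- On `S³` with the round metric the angle function `f` satisfies
`‖∇f‖² = 4(1 - f²)`; in particular `f` is transnormal. -/
theorem sphere_angle_function_transnormal :
    ∀ p ∈ Metric.sphere (0 : E4) 1,
      ‖sphereGrad angleF p‖ ^ 2 = 4 * (1 - angleF p ^ 2) := by
  intro p hp
  have hf : angleF = fun y => ⟪angleReflection y, y⟫ := funext angleF_eq_inner_angleReflection
  rw [sphereGrad, hf]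
  exact norm_sq_tangential_gradient_inner_apply_self angleReflection_isSymmetric
    angleReflection_angleReflection (mem_sphere_zero_iff_norm.mp hp)
end
end

section
/- Let (M, α, Z, β, X, g) be a double K-contact structure with partial complex structures J and φ. The angle function f = g(X,Z) is transnormal with ‖∇f‖² = 4(1 - f²). -/
/-- An abstract Riemannian geometry package: vector fields `VF` form a module over
smooth functions `M → ℝ`, with metric `g`, Levi-Civita connection `cov`,
Lie bracket, directional derivative `D` and gradient. -/
structure RGeom (M : Type) (VF : Type) [AddCommGroup VF] [Module (M → ℝ) VF] where
  D : VF → (M → ℝ) → (M → ℝ)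
  g : VF → VF → M → ℝ
  cov : VF → VF → VF
  bracket : VF → VF → VF
  grad : (M → ℝ) → VF
  g_symm : ∀ X Y, g X Y = g Y X
  g_addl : ∀ X Y Z, g (X + Y) Z = g X Z + g Y Z
  g_smull : ∀ (f : M → ℝ) X Y, g (f • X) Y = f * g X Y
  cov_addl : ∀ X Y Z, cov (X + Y) Z = cov X Z + cov Y Z
  cov_addr : ∀ X Y Z, cov X (Y + Z) = cov X Y + cov X Z
  cov_smull : ∀ (f : M → ℝ) X Y, cov (f • X) Y = f • cov X Y
  cov_smulr : ∀ (f : M → ℝ) X Y, cov X (f • Y) = (D X f) • Y + f • cov X Y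
  torsion_free : ∀ X Y, cov X Y - cov Y X = bracket X Y
  metric_compat : ∀ X Y Z, D X (g Y Z) = g (cov X Y) Z + g Y (cov X Z)
  grad_spec : ∀ f X, g (grad f) X = D X f

/-- A K-contact structure relative to the geometry package `G`: contact form `α`
with Reeb field `Z`, partial complex structure `J`, adapted metric `G.g`,
and `Z` a Killing field. -/
structure IsKContact {M VF : Type} [AddCommGroup VF] [Module (M → ℝ) VF]
    (G : RGeom M VF) (α : VF → M → ℝ) (Z : VF) (J : VF → VF) : Prop where
  alpha_eq : ∀ A, α A = G.g A Z
  reeb_unit : G.g Z Z = 1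
  J_Z : J Z = 0
  J_add : ∀ A B, J (A + B) = J A + J B
  J_smul : ∀ (f : M → ℝ) A, J (f • A) = f • J A
  J_sq : ∀ A, J (J A) = -A + (α A) • Z
  dalpha_eq : ∀ A B, G.D A (α B) - G.D B (α A) - α (G.bracket A B) = 2 * G.g A (J B)
  killing : ∀ A B, G.g (G.cov A Z) B + G.g (G.cov B Z) A = 0

/-- A double K-contact structure: two K-contact structures with the same adapted
metric and commuting Reeb fields. -/
structure IsDoubleKContact {M VF : Type} [AddCommGroup VF] [Module (M → ℝ) VF]
    (G : RGeom M VF) (α : VF → M → ℝ) (Z : VF) (J : VF → VF)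
    (β : VF → M → ℝ) (X : VF) (φ : VF → VF) : Prop where
  kc_alpha : IsKContact G α Z J
  kc_beta : IsKContact G β X φ
  commute : G.bracket X Z = 0

/-- The Sasakian condition for a K-contact structure. -/
def IsSasakian {M VF : Type} [AddCommGroup VF] [Module (M → ℝ) VF]
    (G : RGeom M VF) (α : VF → M → ℝ) (Z : VF) (J : VF → VF) : Prop :=
  ∀ A B, G.cov A (J B) - J (G.cov A B) = (G.g A B) • Z - (α B) • A

section Aux
variable {M VF : Type} [AddCommGroup VF] [Module (M → ℝ) VF] (G : RGeom M VF)

lemma RGeom.g_negl (V W : VF) : G.g (-V) W = -(G.g V W) := by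
  have h : (-V) = ((-1 : M → ℝ)) • V := (neg_one_smul _ V).symm
  rw [h, G.g_smull]; funext p; simp

lemma RGeom.g_subl (U V W : VF) : G.g (U - V) W = G.g U W - G.g V W := by
  rw [sub_eq_add_neg, G.g_addl, G.g_negl]; funext p; simp [sub_eq_add_neg]

lemma cov_reeb {α : VF → M → ℝ} {Z : VF} {J : VF → VF}
    (kc : IsKContact G α Z J) (A B : VF) :
    G.g (G.cov A Z) B = G.g A (J B) := by
  have h := kc.dalpha_eq A B
  rw [kc.alpha_eq, kc.alpha_eq, kc.alpha_eq, G.metric_compat, G.metric_compat,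
    ← G.torsion_free, G.g_subl] at h
  have hk := kc.killing A B
  have hs1 : G.g B (G.cov A Z) = G.g (G.cov A Z) B := G.g_symm _ _
  have hs2 : G.g A (G.cov B Z) = G.g (G.cov B Z) A := G.g_symm _ _
  funext p
  have h' := congrFun h p
  have hk' := congrFun hk p
  have h1 := congrFun hs1 p
  have h2 := congrFun hs2 p
  simp only [Pi.add_apply, Pi.sub_apply, Pi.mul_apply, Pi.ofNat_apply, Pi.zero_apply] at h' hk' h1 h2 ⊢
  norm_num at h'
  linarith

lemma skewJ {α : VF → M → ℝ} {Z : VF} {J : VF → VF}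
    (kc : IsKContact G α Z J) (A B : VF) :
    G.g A (J B) = -(G.g B (J A)) := by
  rw [← cov_reeb G kc, ← cov_reeb G kc]
  have hk := kc.killing A B
  funext p
  have := congrFun hk p
  simp only [Pi.add_apply, Pi.neg_apply, Pi.zero_apply] at this ⊢
  linarith
end Aux

/-- For a double K-contact structure, the angle function `f = g(X,Z)` is
transnormal, with `‖∇f‖² = 4(1 - f²)`. -/
theorem double_k_contact_angle_transnormal
    {M VF : Type} [AddCommGroup VF] [Module (M → ℝ) VF] (G : RGeom M VF)
    (α β : VF → M → ℝ) (Z X : VF) (J φ : VF → VF)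
    (hdk : IsDoubleKContact G α Z J β X φ) :
    ∀ p, G.g (G.grad (G.g X Z)) (G.grad (G.g X Z)) p
        = 4 * (1 - (G.g X Z p) ^ 2) := by
  obtain ⟨ka, kb, hc⟩ := hdk
  set f : M → ℝ := G.g X Z with hf
  -- cov X Z = cov Z X
  have hcomm : G.cov X Z = G.cov Z X := by
    have := G.torsion_free X Z
    rw [hc] at this
    exact sub_eq_zero.mp this
  -- key : ∀ A, g A (φ Z) = g A (J X)
  have heq : ∀ A, G.g A (φ Z) = G.g A (J X) := by
    intro A
    have h1 : G.g A (φ Z) = -(G.g (G.cov Z X) A) := by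
      rw [skewJ G kb, cov_reeb G kb]
    have h2 : G.g A (J X) = -(G.g (G.cov X Z) A) := by
      rw [skewJ G ka, cov_reeb G ka]
    rw [h1, h2, hcomm]
  -- D A f = g A (φ Z) + g A (J X)
  have hD : ∀ A, G.D A f = G.g A (φ Z) + G.g A (J X) := by
    intro A
    rw [hf, G.metric_compat, cov_reeb G kb, G.g_symm X (G.cov A Z), cov_reeb G ka]
  -- g (JX) (JX) = 1 - f * f
  have hJX : G.g (J X) (J X) = 1 - f * f := by
    have hs := skewJ G ka X (J X)
    rw [ka.J_sq X, ka.alpha_eq X, G.g_symm X, G.g_addl, G.g_negl, G.g_smull,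
      kb.reeb_unit, G.g_symm Z X] at hs
    funext p
    have := congrFun hs p
    simp only [Pi.add_apply, Pi.neg_apply, Pi.mul_apply, Pi.sub_apply, Pi.one_apply] at this ⊢
    linarith
  -- expand the gradient norm
  have hgrad : G.g (G.grad f) (G.grad f) = G.D (G.grad f) f := G.grad_spec f _
  have hmain : G.g (G.grad f) (G.grad f)
      = G.g (φ Z) (φ Z) + G.g (φ Z) (J X) + (G.g (J X) (φ Z) + G.g (J X) (J X)) := by
    rw [hgrad, hD, G.grad_spec, G.grad_spec, hD, hD]
  have e1 : G.g (φ Z) (φ Z) = G.g (J X) (J X) := by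
    rw [heq (φ Z), G.g_symm (φ Z) (J X), heq (J X)]
  have e2 : G.g (φ Z) (J X) = G.g (J X) (J X) := by
    rw [G.g_symm (φ Z) (J X), heq (J X)]
  have e3 : G.g (J X) (φ Z) = G.g (J X) (J X) := heq (J X)
  rw [e1, e2, e3, hJX] at hmain
  intro p
  have := congrFun hmain p
  simp only [Pi.add_apply, Pi.sub_apply, Pi.mul_apply, Pi.one_apply] at this
  rw [this]; ring
end

section
/- Let (M, α, Z, β, X, g) be a double K-contact structure with α Sasakian, and let J, φ be the associated partial complex structures. Then the Hessian of f = g(X,Z) satisfies Hess_f(A,B) = 2g(A,X)g(Z,B) - 2α(X)g(A,B) - 2g(JφA, B) for all tangent vectors A, B. -/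
/-- For a double K-contact structure with `α` Sasakian, the Hessian of the angle
function `f = g(X,Z)` satisfies
`Hess_f(A,B) = 2 g(A,X) g(Z,B) - 2 α(X) g(A,B) - 2 g(JφA, B)` for all `A, B`,
where `Hess_f(A,B) = g(∇_A ∇f, B)`. -/
theorem double_k_contact_sasakian_hessian
    {M VF : Type} [AddCommGroup VF] [Module (M → ℝ) VF] (G : RGeom M VF)
    (α β : VF → M → ℝ) (Z X : VF) (J φ : VF → VF)
    (hdk : IsDoubleKContact G α Z J β X φ)
    (hsas : IsSasakian G α Z J) :
    ∀ A B : VF, ∀ p,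
      G.g (G.cov A (G.grad (G.g X Z))) B p
        = 2 * G.g A X p * G.g Z B p - 2 * α X p * G.g A B p
          - 2 * G.g (J (φ A)) B p := by

  obtain ⟨kcα, kcβ, hcom⟩ := hdk
  -- linearity of g in the second argument
  have g_addr : ∀ A B C : VF, G.g A (B + C) = G.g A B + G.g A C := by
    intro A B C
    rw [G.g_symm A (B + C), G.g_addl, G.g_symm B A, G.g_symm C A]
  have g_smulr : ∀ (c : M → ℝ) (A B : VF), G.g A (c • B) = c * G.g A B := by
    intro c A B
    rw [G.g_symm A (c • B), G.g_smull, G.g_symm B A]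
  have g_negr : ∀ A B : VF, G.g A (-B) = -G.g A B := by
    intro A B
    rw [← neg_one_smul (M → ℝ) B, g_smulr, neg_one_mul]
  have g_subr : ∀ A B C : VF, G.g A (B - C) = G.g A B - G.g A C := by
    intro A B C
    rw [sub_eq_add_neg, g_addr, g_negr, ← sub_eq_add_neg]
  have g_subl : ∀ A B C : VF, G.g (A - B) C = G.g A C - G.g B C := by
    intro A B C
    rw [G.g_symm (A - B) C, g_subr, G.g_symm C A, G.g_symm C B]
  -- key: for a K-contact structure, g(∇_A Z', B) = g(A, J' B)
  have key : ∀ (α' : VF → M → ℝ) (Z' : VF) (J' : VF → VF),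
      IsKContact G α' Z' J' → ∀ A B p, G.g (G.cov A Z') B p = G.g A (J' B) p := by
    intro α' Z' J' kc A B p
    have hd := kc.dalpha_eq A B
    simp only [kc.alpha_eq] at hd
    rw [G.metric_compat A B Z', G.metric_compat B A Z', ← G.torsion_free A B,
      g_subl] at hd
    have hk := congrFun (kc.killing A B) p
    have hs1 := congrFun (G.g_symm B (G.cov A Z')) p
    have hs2 := congrFun (G.g_symm A (G.cov B Z')) p
    have hd' := congrFun hd p
    simp only [Pi.add_apply, Pi.sub_apply, Pi.mul_apply, Pi.zero_apply] at hd' hk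
    have h2 : (2 : M → ℝ) p = (2 : ℝ) := rfl
    rw [h2] at hd'
    linarith
  -- skew-symmetry of J and φ with respect to g
  have Jskew : ∀ C D p, G.g C (J D) p = - G.g D (J C) p := by
    intro C D p
    have h1 := key α Z J kcα C D p
    have h2 := key α Z J kcα D C p
    have hk := congrFun (kcα.killing C D) p
    simp only [Pi.add_apply, Pi.zero_apply] at hk
    linarith
  have φskew : ∀ C D p, G.g C (φ D) p = - G.g D (φ C) p := by
    intro C D p
    have h1 := key β X φ kcβ C D p
    have h2 := key β X φ kcβ D C p
    have hk := congrFun (kcβ.killing C D) p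
    simp only [Pi.add_apply, Pi.zero_apply] at hk
    linarith
  -- ∇_X Z = ∇_Z X, hence g(Z, φ B) = g(X, J B)
  have hcomm : G.cov X Z = G.cov Z X := by
    have h : G.cov X Z - G.cov Z X = 0 := by rw [G.torsion_free]; exact hcom
    exact sub_eq_zero.mp h
  have hφZ : ∀ B p, G.g Z (φ B) p = G.g X (J B) p := by
    intro B p
    have h1 := key β X φ kcβ Z B p
    have h2 := key α Z J kcα X B p
    rw [hcomm] at h2
    linarith
  -- the gradient identity: D_B f = g(B, JX + JX)
  have hDf : ∀ B : VF, G.D B (G.g X Z) = G.g B (J X + J X) := by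
    intro B
    rw [G.metric_compat B X Z]
    funext p
    have h1 := key β X φ kcβ B Z p      -- g(cov B X) Z = g B (φ Z)
    have h2 := key α Z J kcα B X p      -- g(cov B Z) X = g B (J X)
    have hs1 := congrFun (G.g_symm X (G.cov B Z)) p
    have h3 := φskew B Z p
    have h4 := hφZ B p
    have h5 := Jskew B X p
    have h6 := congrFun (g_addr B (J X) (J X)) p
    simp only [Pi.add_apply] at h6 ⊢
    linarith
  intro A B p
  -- Hessian formula via metric compatibility and grad_spec
  have h1 := G.metric_compat A (G.grad (G.g X Z)) B
  rw [G.grad_spec (G.g X Z) B, hDf B, G.grad_spec (G.g X Z) (G.cov A B),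
    hDf (G.cov A B), G.metric_compat A B (J X + J X)] at h1
  have hmain := congrFun h1 p
  simp only [Pi.add_apply] at hmain
  -- expand cov A (JX + JX)
  rw [G.cov_addr A (J X) (J X)] at hmain
  -- Sasakian expansion of cov A (J X)
  have hcovJX : G.cov A (J X) = J (G.cov A X) + ((G.g A X) • Z - (α X) • A) := by
    have h0 := hsas A X
    rw [← h0]; abel
  have hexp : G.g B (G.cov A (J X)) p
      = G.g B (J (G.cov A X)) p + G.g A X p * G.g Z B p - α X p * G.g A B p := by
    rw [hcovJX, g_addr, g_subr, g_smulr, g_smulr]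
    have hs1 := congrFun (G.g_symm B Z) p
    have hs2 := congrFun (G.g_symm B A) p
    simp only [Pi.add_apply, Pi.sub_apply, Pi.mul_apply]
    rw [hs1, hs2]
    ring
  -- g(B, J ∇_A X) = - g(JφA, B)
  have hchain : G.g B (J (G.cov A X)) p = - G.g (J (φ A)) B p := by
    have e1 := Jskew (G.cov A X) B p      -- g(covAX)(JB) = - g B (J covAX)
    have e2 := key β X φ kcβ A (J B) p    -- g(cov A X)(J B) = g A (φ (J B))
    have e3 := φskew A (J B) p            -- g A (φ (JB)) = - g (JB) (φ A)
    have e4 := congrFun (G.g_symm (J B) (φ A)) p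
    have e5 := Jskew (φ A) B p            -- g (φ A) (J B) = - g B (J (φ A))
    have e6 := congrFun (G.g_symm B (J (φ A))) p
    linarith
  have hWadd := congrFun (g_addr B (G.cov A (J X)) (G.cov A (J X))) p
  simp only [Pi.add_apply] at hWadd
  linarith
end
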